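/- arXiv:1608.07885 — 4 statements merged into one kernel-verified Lean document; each statement's English description precedes it below -/
import Mathlib

section
/- Consider a 2×4 table of positive real cell probabilities with first row A, B, C, D and second row E, F, G, H. The following two sets of conditions are equivalent: (P1) AF = BE, CH = DG, and BG = CF; (P2) AF = BE, CH = DG, and (A+B)(G+H) = (E+F)(C+D). -/
/-!
Read each column `(x, y)` of the table as a vector in the plane. The equations `AF = BE`,
`CH = DG`, `BG = CF` say that consecutive columns are parallel, and the third condition of P2
says that the sum of the first two columns is parallel to the sum of the last two. Parallelism
is transitive through a nonzero vector and parallel vectors are parallel to their sum, so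
under positivity both condition sets say that all four columns are parallel.
-/

variable {R : Type*} [CommRing R]

def Proportional (a e b f : R) : Prop := a * f = b * e

namespace Proportional

variable {a b c d e f g h : R}

theorem symm (hp : Proportional a e b f) : Proportional b f a e := Eq.symm hp

theorem trans [IsDomain R] (hbf : b ≠ 0 ∨ f ≠ 0) (h₁ : Proportional a e b f)
    (h₂ : Proportional b f c g) : Proportional a e c g := by
  unfold Proportional at *
  rcases hbf with hb | hf
  · exact mul_right_cancel₀ hb (by linear_combination a * h₂ + c * h₁)
  · exact mul_right_cancel₀ hf (by linear_combination g * h₁ + e * h₂)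

theorem add_right (hp : Proportional a e b f) : Proportional a e (a + b) (e + f) := by
  unfold Proportional at *
  linear_combination hp

theorem add_left (hp : Proportional a e b f) : Proportional (a + b) (e + f) b f := by
  unfold Proportional at *
  linear_combination hp

theorem add_add (hac : Proportional a e c g) (had : Proportional a e d h)
    (hbc : Proportional b f c g) (hbd : Proportional b f d h) :
    Proportional (a + b) (e + f) (c + d) (g + h) := by
  unfold Proportional at *
  linear_combination hac + had + hbc + hbd

end Proportional

theorem fes_2x4_condition_equivalence_general
    (A B C D E F G H : ℝ)
    (hC : 0 < C) (hD : 0 < D)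
    (hE : 0 < E) (hF : 0 < F) :
    (A * F = B * E ∧ C * H = D * G ∧ B * G = C * F) ↔
    (A * F = B * E ∧ C * H = D * G ∧ (A + B) * (G + H) = (E + F) * (C + D)) := by
  refine ⟨fun ⟨h₁, h₂, h₃⟩ => ⟨h₁, h₂, ?_⟩, fun ⟨h₁, h₂, h₃⟩ => ⟨h₁, h₂, ?_⟩⟩
  · have h₁₃ : Proportional A E C G := Proportional.trans (.inr hF.ne') h₁ h₃
    have h₁₄ : Proportional A E D H := h₁₃.trans (.inl hC.ne') h₂
    have h₂₄ : Proportional B F D H := Proportional.trans (.inl hC.ne') h₃ h₂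
    have hsum : (A + B) * (G + H) = (C + D) * (E + F) := h₁₃.add_add h₁₄ h₃ h₂₄
    linear_combination hsum
  · have hsum : Proportional (A + B) (E + F) (C + D) (G + H) := by
      unfold Proportional
      linear_combination h₃
    have h₂₄ : Proportional B F (C + D) (G + H) :=
      (Proportional.add_left h₁).symm.trans (.inr (by positivity)) hsum
    exact h₂₄.trans (.inl (by positivity)) (Proportional.add_right h₂).symm

/-- Proposition 1 of the paper: for a 2×4 table of positive cell probabilities
with first row A, B, C, D and second row E, F, G, H, the condition sets
P1 = {AF = BE, CH = DG, BG = CF} and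
P2 = {AF = BE, CH = DG, (A+B)(G+H) = (E+F)(C+D)} are equivalent. -/
theorem fes_2x4_condition_equivalence
    (A B C D E F G H : ℝ)
    (hA : 0 < A) (hB : 0 < B) (hC : 0 < C) (hD : 0 < D)
    (hE : 0 < E) (hF : 0 < F) (hG : 0 < G) (hH : 0 < H) :
    (A * F = B * E ∧ C * H = D * G ∧ B * G = C * F) ↔
    (A * F = B * E ∧ C * H = D * G ∧ (A + B) * (G + H) = (E + F) * (C + D)) :=
  fes_2x4_condition_equivalence_general A B C D E F G H hC hD hE hF
end

section
/- Let F be a probability distribution on [0,1]² with all dyadic rectangle probabilities positive. For k1, k2 ≥ 1, F is (k1,k2)-independent if and only if θ(A) = 0 for every window A in the collection ⋃_{i ≤ k1-1, j ≤ k2-1} A^{i,j} of coarser-stratum windows, where θ(A) = log[F(A_{00})F(A_{11})/(F(A_{01})F(A_{10}))] is the log odds-ratio of the 2×2 subtable obtained by splitting A into its four dyadic quadrants A_{00}, A_{01}, A_{10}, A_{11}. -/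
open MeasureTheory

/-- The dyadic interval I^k_l = [(l-1)/2^k, l/2^k), with l = 1,...,2^k. -/
def dyadic (k l : ℕ) : Set ℝ := Set.Ico (((l : ℝ) - 1) / 2 ^ k) ((l : ℝ) / 2 ^ k)

open Finset

/-! Masses add up when a dyadic interval is split into its two halves, so independence at level
`(a, b)` is inherited by all coarser levels and makes the quadrant table of every coarser window a
product table, of odds ratio `1`. Conversely, if independence holds at levels `(a, b + 1)` and
`(a + 1, b)`, the quadrant table of each level-`(a, b)` window has product-form row sums and first
column sum; with odds ratio `1` this leaves only the product table, i.e. independence at level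
`(a + 1, b + 1)`. A double induction from the trivial levels `(0, b)` and `(a, 0)` reaches
`(k1, k2)`. -/

lemma cast_two_mul_sub_one {l : ℕ} (hl : 1 ≤ l) : ((2 * l - 1 : ℕ) : ℝ) = 2 * l - 1 := by
  rw [Nat.cast_sub (by omega)]
  push_cast
  ring

lemma dyadic_eq_union (i l : ℕ) (hl : 1 ≤ l) :
    dyadic i l = dyadic (i + 1) (2 * l - 1) ∪ dyadic (i + 1) (2 * l) := by
  have hl' : (1 : ℝ) ≤ l := by exact_mod_cast hl
  unfold dyadic
  rw [cast_two_mul_sub_one hl]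
  push_cast
  rw [pow_succ, Set.Ico_union_Ico_eq_Ico]
  · congr 1
    · field_simp
      ring
    · field_simp
  all_goals rw [div_le_div_iff_of_pos_right (by positivity)]; linarith

lemma disjoint_dyadic_children (i l : ℕ) (hl : 1 ≤ l) :
    Disjoint (dyadic (i + 1) (2 * l - 1)) (dyadic (i + 1) (2 * l)) := by
  unfold dyadic
  rw [cast_two_mul_sub_one hl]
  push_cast
  exact Set.Ico_disjoint_Ico_same

lemma measurableSet_dyadic (k l : ℕ) : MeasurableSet (dyadic k l) := measurableSet_Ico

lemma two_mul_sub_one_mem_Icc {i l : ℕ} (hl : l ∈ Icc 1 (2 ^ i)) :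
    2 * l - 1 ∈ Icc 1 (2 ^ (i + 1)) := by
  rw [mem_Icc] at hl ⊢
  rw [pow_succ]
  omega

lemma two_mul_mem_Icc {i l : ℕ} (hl : l ∈ Icc 1 (2 ^ i)) : 2 * l ∈ Icc 1 (2 ^ (i + 1)) := by
  rw [mem_Icc] at hl ⊢
  rw [pow_succ]
  omega

lemma exists_parent_mem_Icc {i l : ℕ} (hl : l ∈ Icc 1 (2 ^ (i + 1))) :
    ∃ m ∈ Icc 1 (2 ^ i), l = 2 * m - 1 ∨ l = 2 * m := by
  rw [mem_Icc, pow_succ] at hl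
  exact ⟨(l + 1) / 2, mem_Icc.mpr ⟨by omega, by omega⟩, by omega⟩

lemma Real.log_div_eq_zero_iff {x y : ℝ} (hx : 0 < x) (hy : 0 < y) :
    Real.log (x / y) = 0 ↔ x = y := by
  rw [Real.log_div hx.ne' hy.ne', sub_eq_zero, Real.log_injOn_pos.eq_iff hx hy]

lemma eq_mul_of_cross_eq_of_sums {R : Type*} [CommRing R] [IsDomain R]
    {q₀₀ q₀₁ q₁₀ q₁₁ x₀ x₁ y₀ y₁ : R} (hcross : q₀₀ * q₁₁ = q₀₁ * q₁₀)
    (hrow₀ : q₀₀ + q₀₁ = x₀ * (y₀ + y₁)) (hrow₁ : q₁₀ + q₁₁ = x₁ * (y₀ + y₁))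
    (hcol₀ : q₀₀ + q₁₀ = (x₀ + x₁) * y₀) (htot : (x₀ + x₁) * (y₀ + y₁) ≠ 0) :
    q₀₀ = x₀ * y₀ ∧ q₀₁ = x₀ * y₁ ∧ q₁₀ = x₁ * y₀ ∧ q₁₁ = x₁ * y₁ := by
  -- `q₀₀` times the total is (row sum) × (column sum) once `q₀₀ q₁₁ = q₀₁ q₁₀`.
  have h₀₀ : q₀₀ = x₀ * y₀ := mul_right_cancel₀ htot <| by
    linear_combination hcross - q₀₀ * hrow₁ + (x₀ * (y₀ + y₁)) * hcol₀ + q₁₀ * hrow₀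
  refine ⟨h₀₀, ?_, ?_, ?_⟩
  · linear_combination hrow₀ - h₀₀
  · linear_combination hcol₀ - h₀₀
  · linear_combination hrow₁ - hcol₀ + h₀₀

section DyadicMass

variable (F : Measure (ℝ × ℝ))

noncomputable def dyadicMass (i j l₁ l₂ : ℕ) : ℝ := (F (dyadic i l₁ ×ˢ dyadic j l₂)).toReal

/-- The marginal masses are those of `I^a_{l₁} × I^0_1` and `I^0_1 × I^b_{l₂}`, which are
`F_X(I^a_{l₁})` and `F_Y(I^b_{l₂})` when `F` is carried by `[0, 1)²`. -/
def IsIndepAt (a b : ℕ) : Prop :=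
  ∀ l₁ ∈ Icc 1 (2 ^ a), ∀ l₂ ∈ Icc 1 (2 ^ b),
    dyadicMass F a b l₁ l₂ = dyadicMass F a 0 l₁ 1 * dyadicMass F 0 b 1 l₂

/-- `θ(A) = 0` for the level-`(i, j)` window `A = I^i_{l₁} × I^j_{l₂}`, stated without division. -/
def HasUnitOddsRatio (i j l₁ l₂ : ℕ) : Prop :=
  dyadicMass F (i + 1) (j + 1) (2 * l₁ - 1) (2 * l₂ - 1) *
      dyadicMass F (i + 1) (j + 1) (2 * l₁) (2 * l₂) =
    dyadicMass F (i + 1) (j + 1) (2 * l₁ - 1) (2 * l₂) *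
      dyadicMass F (i + 1) (j + 1) (2 * l₁) (2 * l₂ - 1)

variable {F}

lemma isIndepAt_zero_left (hunit : dyadicMass F 0 0 1 1 = 1) (b : ℕ) : IsIndepAt F 0 b := by
  intro l₁ hl₁ l₂ _
  obtain rfl : l₁ = 1 := by simpa using hl₁
  rw [hunit, one_mul]

lemma isIndepAt_zero_right (hunit : dyadicMass F 0 0 1 1 = 1) (a : ℕ) : IsIndepAt F a 0 := by
  intro l₁ _ l₂ hl₂
  obtain rfl : l₂ = 1 := by simpa using hl₂
  rw [hunit, mul_one]

lemma IsIndepAt.hasUnitOddsRatio {i j l₁ l₂ : ℕ} (h : IsIndepAt F (i + 1) (j + 1))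
    (hl₁ : l₁ ∈ Icc 1 (2 ^ i)) (hl₂ : l₂ ∈ Icc 1 (2 ^ j)) : HasUnitOddsRatio F i j l₁ l₂ := by
  unfold HasUnitOddsRatio
  rw [h _ (two_mul_sub_one_mem_Icc hl₁) _ (two_mul_sub_one_mem_Icc hl₂),
    h _ (two_mul_mem_Icc hl₁) _ (two_mul_mem_Icc hl₂),
    h _ (two_mul_sub_one_mem_Icc hl₁) _ (two_mul_mem_Icc hl₂),
    h _ (two_mul_mem_Icc hl₁) _ (two_mul_sub_one_mem_Icc hl₂)]
  ring

lemma log_quadrant_odds_ratio_eq_zero_iff {i j l₁ l₂ : ℕ}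
    (hpos : ∀ m₁ ∈ Icc 1 (2 ^ (i + 1)), ∀ m₂ ∈ Icc 1 (2 ^ (j + 1)),
      0 < dyadicMass F (i + 1) (j + 1) m₁ m₂)
    (hl₁ : l₁ ∈ Icc 1 (2 ^ i)) (hl₂ : l₂ ∈ Icc 1 (2 ^ j)) :
    Real.log (dyadicMass F (i + 1) (j + 1) (2 * l₁ - 1) (2 * l₂ - 1) *
        dyadicMass F (i + 1) (j + 1) (2 * l₁) (2 * l₂) /
      (dyadicMass F (i + 1) (j + 1) (2 * l₁ - 1) (2 * l₂) *
        dyadicMass F (i + 1) (j + 1) (2 * l₁) (2 * l₂ - 1))) = 0 ↔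
    HasUnitOddsRatio F i j l₁ l₂ :=
  have h₁ := two_mul_sub_one_mem_Icc hl₁
  have h₂ := two_mul_mem_Icc hl₁
  Real.log_div_eq_zero_iff
    (mul_pos (hpos _ h₁ _ (two_mul_sub_one_mem_Icc hl₂)) (hpos _ h₂ _ (two_mul_mem_Icc hl₂)))
    (mul_pos (hpos _ h₁ _ (two_mul_mem_Icc hl₂)) (hpos _ h₂ _ (two_mul_sub_one_mem_Icc hl₂)))

variable [IsFiniteMeasure F]

lemma dyadicMass_split_left (i j : ℕ) {l₁ : ℕ} (l₂ : ℕ) (hl₁ : 1 ≤ l₁) :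
    dyadicMass F i j l₁ l₂ =
      dyadicMass F (i + 1) j (2 * l₁ - 1) l₂ + dyadicMass F (i + 1) j (2 * l₁) l₂ := by
  unfold dyadicMass
  rw [dyadic_eq_union i l₁ hl₁, Set.union_prod,
    measure_union (Set.disjoint_prod.mpr (.inl (disjoint_dyadic_children i l₁ hl₁)))
      ((measurableSet_dyadic _ _).prod (measurableSet_dyadic _ _)),
    ENNReal.toReal_add (measure_ne_top F _) (measure_ne_top F _)]

lemma dyadicMass_split_right (i j l₁ : ℕ) {l₂ : ℕ} (hl₂ : 1 ≤ l₂) :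
    dyadicMass F i j l₁ l₂ =
      dyadicMass F i (j + 1) l₁ (2 * l₂ - 1) + dyadicMass F i (j + 1) l₁ (2 * l₂) := by
  unfold dyadicMass
  rw [dyadic_eq_union j l₂ hl₂, Set.prod_union,
    measure_union (Set.disjoint_prod.mpr (.inr (disjoint_dyadic_children j l₂ hl₂)))
      ((measurableSet_dyadic _ _).prod (measurableSet_dyadic _ _)),
    ENNReal.toReal_add (measure_ne_top F _) (measure_ne_top F _)]

lemma IsIndepAt.of_succ_left {a b : ℕ} (h : IsIndepAt F (a + 1) b) : IsIndepAt F a b := by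
  intro l₁ hl₁ l₂ hl₂
  have hl₁' : 1 ≤ l₁ := (mem_Icc.mp hl₁).1
  rw [dyadicMass_split_left a b l₂ hl₁', dyadicMass_split_left a 0 1 hl₁',
    h _ (two_mul_sub_one_mem_Icc hl₁) l₂ hl₂, h _ (two_mul_mem_Icc hl₁) l₂ hl₂, add_mul]

lemma IsIndepAt.of_succ_right {a b : ℕ} (h : IsIndepAt F a (b + 1)) : IsIndepAt F a b := by
  intro l₁ hl₁ l₂ hl₂
  have hl₂' : 1 ≤ l₂ := (mem_Icc.mp hl₂).1
  rw [dyadicMass_split_right a b l₁ hl₂', dyadicMass_split_right 0 b 1 hl₂',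
    h l₁ hl₁ _ (two_mul_sub_one_mem_Icc hl₂), h l₁ hl₁ _ (two_mul_mem_Icc hl₂), mul_add]

lemma IsIndepAt.mono {a b a' b' : ℕ} (h : IsIndepAt F a b) (ha : a' ≤ a) (hb : b' ≤ b) :
    IsIndepAt F a' b' := by
  have hleft : ∀ n, a' ≤ n → IsIndepAt F n b → IsIndepAt F a' b := by
    intro n hn
    induction n, hn using Nat.le_induction with
    | base => exact id
    | succ n _ ih => exact fun h ↦ ih h.of_succ_left
  have hright : ∀ n, b' ≤ n → IsIndepAt F a' n → IsIndepAt F a' b' := by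
    intro n hn
    induction n, hn using Nat.le_induction with
    | base => exact id
    | succ n _ ih => exact fun h ↦ ih h.of_succ_right
  exact hright b hb (hleft a ha h)

lemma IsIndepAt.succ_succ {a b : ℕ} (hleft : IsIndepAt F a (b + 1))
    (hright : IsIndepAt F (a + 1) b)
    (hodds : ∀ l₁ ∈ Icc 1 (2 ^ a), ∀ l₂ ∈ Icc 1 (2 ^ b), HasUnitOddsRatio F a b l₁ l₂)
    (hX : ∀ l ∈ Icc 1 (2 ^ a), dyadicMass F a 0 l 1 ≠ 0)
    (hY : ∀ l ∈ Icc 1 (2 ^ b), dyadicMass F 0 b 1 l ≠ 0) :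
    IsIndepAt F (a + 1) (b + 1) := by
  intro l₁ hl₁ l₂ hl₂
  obtain ⟨m₁, hm₁, hl₁m⟩ := exists_parent_mem_Icc hl₁
  obtain ⟨m₂, hm₂, hl₂m⟩ := exists_parent_mem_Icc hl₂
  have h₁ : 1 ≤ m₁ := (mem_Icc.mp hm₁).1
  have h₂ : 1 ≤ m₂ := (mem_Icc.mp hm₂).1
  have hrow₀ := hright _ (two_mul_sub_one_mem_Icc hm₁) m₂ hm₂
  have hrow₁ := hright _ (two_mul_mem_Icc hm₁) m₂ hm₂
  have hcol₀ := hleft m₁ hm₁ _ (two_mul_sub_one_mem_Icc hm₂)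
  have htot := mul_ne_zero (hX m₁ hm₁) (hY m₂ hm₂)
  rw [dyadicMass_split_right _ b _ h₂, dyadicMass_split_right 0 b 1 h₂] at hrow₀ hrow₁
  rw [dyadicMass_split_left a _ _ h₁, dyadicMass_split_left a 0 1 h₁] at hcol₀
  rw [dyadicMass_split_left a 0 1 h₁, dyadicMass_split_right 0 b 1 h₂] at htot
  obtain ⟨h₀₀, h₀₁, h₁₀, h₁₁⟩ :=
    eq_mul_of_cross_eq_of_sums (hodds m₁ hm₁ m₂ hm₂) hrow₀ hrow₁ hcol₀ htot
  rcases hl₁m with rfl | rfl <;> rcases hl₂m with rfl | rfl <;> assumption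

lemma isIndepAt_of_forall_hasUnitOddsRatio {k₁ k₂ : ℕ} (hunit : dyadicMass F 0 0 1 1 = 1)
    (hX : ∀ i, ∀ l ∈ Icc 1 (2 ^ i), dyadicMass F i 0 l 1 ≠ 0)
    (hY : ∀ j, ∀ l ∈ Icc 1 (2 ^ j), dyadicMass F 0 j 1 l ≠ 0)
    (hodds : ∀ i < k₁, ∀ j < k₂, ∀ l₁ ∈ Icc 1 (2 ^ i), ∀ l₂ ∈ Icc 1 (2 ^ j),
      HasUnitOddsRatio F i j l₁ l₂) :
    IsIndepAt F k₁ k₂ := by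
  suffices ∀ a ≤ k₁, ∀ b ≤ k₂, IsIndepAt F a b from this k₁ le_rfl k₂ le_rfl
  intro a
  induction a with
  | zero => exact fun _ b _ ↦ isIndepAt_zero_left hunit b
  | succ a iha =>
    intro ha b
    induction b with
    | zero => exact fun _ ↦ isIndepAt_zero_right hunit (a + 1)
    | succ b ihb =>
      intro hb
      exact (iha (by omega) (b + 1) hb).succ_succ (ihb (by omega))
        (hodds a (by omega) b (by omega)) (hX a) (hY b)

lemma isIndepAt_iff {a b : ℕ} :
    IsIndepAt F a b ↔ ∀ l₁ ∈ Icc 1 (2 ^ a), ∀ l₂ ∈ Icc 1 (2 ^ b),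
      F (dyadic a l₁ ×ˢ dyadic b l₂) =
        F (dyadic a l₁ ×ˢ dyadic 0 1) * F (dyadic 0 1 ×ˢ dyadic b l₂) := by
  refine forall₂_congr fun l₁ _ ↦ forall₂_congr fun l₂ _ ↦ ?_
  rw [dyadicMass, dyadicMass, dyadicMass, ← ENNReal.toReal_mul,
    ENNReal.toReal_eq_toReal_iff' (measure_ne_top _ _)
      (ENNReal.mul_ne_top (measure_ne_top _ _) (measure_ne_top _ _))]

end DyadicMass

theorem k1k2_independence_iff_all_coarser_log_odds_ratios_zero_general
    (F : Measure (ℝ × ℝ)) [IsProbabilityMeasure F]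
    (hF : F (dyadic 0 1 ×ˢ dyadic 0 1) = 1)
    (hpos : ∀ i j l1 l2, l1 ∈ Finset.Icc 1 (2 ^ i) → l2 ∈ Finset.Icc 1 (2 ^ j) →
      0 < F (dyadic i l1 ×ˢ dyadic j l2))
    (k1 k2 : ℕ) :
    (∀ l1 ∈ Finset.Icc 1 (2 ^ k1), ∀ l2 ∈ Finset.Icc 1 (2 ^ k2),
      F (dyadic k1 l1 ×ˢ dyadic k2 l2) =
        F (dyadic k1 l1 ×ˢ dyadic 0 1) * F (dyadic 0 1 ×ˢ dyadic k2 l2)) ↔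
    (∀ i < k1, ∀ j < k2, ∀ l1 ∈ Finset.Icc 1 (2 ^ i), ∀ l2 ∈ Finset.Icc 1 (2 ^ j),
      Real.log
        ((F (dyadic (i + 1) (2 * l1 - 1) ×ˢ dyadic (j + 1) (2 * l2 - 1))).toReal *
          (F (dyadic (i + 1) (2 * l1) ×ˢ dyadic (j + 1) (2 * l2))).toReal /
        ((F (dyadic (i + 1) (2 * l1 - 1) ×ˢ dyadic (j + 1) (2 * l2))).toReal *
          (F (dyadic (i + 1) (2 * l1) ×ˢ dyadic (j + 1) (2 * l2 - 1))).toReal)) = 0) := by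
  have hpos' : ∀ i j, ∀ l₁ ∈ Icc 1 (2 ^ i), ∀ l₂ ∈ Icc 1 (2 ^ j), 0 < dyadicMass F i j l₁ l₂ :=
    fun i j l₁ hl₁ l₂ hl₂ ↦ ENNReal.toReal_pos (hpos i j l₁ l₂ hl₁ hl₂).ne' (measure_ne_top _ _)
  have hlog i j l₁ (hl₁ : l₁ ∈ Icc 1 (2 ^ i)) l₂ (hl₂ : l₂ ∈ Icc 1 (2 ^ j)) :=
    log_quadrant_odds_ratio_eq_zero_iff (hpos' (i + 1) (j + 1)) hl₁ hl₂
  rw [← isIndepAt_iff]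
  constructor
  · exact fun hind i hi j hj l₁ hl₁ l₂ hl₂ ↦
      (hlog i j l₁ hl₁ l₂ hl₂).mpr ((hind.mono hi hj).hasUnitOddsRatio hl₁ hl₂)
  · intro hθ
    exact isIndepAt_of_forall_hasUnitOddsRatio (by simp [dyadicMass, hF])
      (fun i l hl ↦ (hpos' i 0 l hl 1 (by simp)).ne')
      (fun j l hl ↦ (hpos' 0 j 1 (by simp) l hl).ne')
      fun i hi j hj l₁ hl₁ l₂ hl₂ ↦ (hlog i j l₁ hl₁ l₂ hl₂).mp (hθ i hi j hj l₁ hl₁ l₂ hl₂)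

/-- Theorem 2 of the paper: for F a probability distribution on [0,1]² with all
dyadic rectangle probabilities positive and k1, k2 ≥ 1, F is
(k1,k2)-independent if and only if the log odds-ratio θ(A) vanishes for every
window A = I^i_{l1}×I^j_{l2} with i ≤ k1-1 and j ≤ k2-1, where θ(A) is the log
odds-ratio of the 2×2 table of the four dyadic quadrants of A. -/
theorem k1k2_independence_iff_all_coarser_log_odds_ratios_zero
    (F : Measure (ℝ × ℝ)) [IsProbabilityMeasure F]
    (hF : F (dyadic 0 1 ×ˢ dyadic 0 1) = 1)
    (hpos : ∀ i j l1 l2, l1 ∈ Finset.Icc 1 (2 ^ i) → l2 ∈ Finset.Icc 1 (2 ^ j) →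
      0 < F (dyadic i l1 ×ˢ dyadic j l2))
    (k1 k2 : ℕ) (hk1 : 1 ≤ k1) (hk2 : 1 ≤ k2) :
    (∀ l1 ∈ Finset.Icc 1 (2 ^ k1), ∀ l2 ∈ Finset.Icc 1 (2 ^ k2),
      F (dyadic k1 l1 ×ˢ dyadic k2 l2) =
        F (dyadic k1 l1 ×ˢ dyadic 0 1) * F (dyadic 0 1 ×ˢ dyadic k2 l2)) ↔
    (∀ i < k1, ∀ j < k2, ∀ l1 ∈ Finset.Icc 1 (2 ^ i), ∀ l2 ∈ Finset.Icc 1 (2 ^ j),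
      Real.log
        ((F (dyadic (i + 1) (2 * l1 - 1) ×ˢ dyadic (j + 1) (2 * l2 - 1))).toReal *
          (F (dyadic (i + 1) (2 * l1) ×ˢ dyadic (j + 1) (2 * l2))).toReal /
        ((F (dyadic (i + 1) (2 * l1 - 1) ×ˢ dyadic (j + 1) (2 * l2))).toReal *
          (F (dyadic (i + 1) (2 * l1) ×ˢ dyadic (j + 1) (2 * l2 - 1))).toReal)) = 0) :=
  k1k2_independence_iff_all_coarser_log_odds_ratios_zero_general F hF hpos k1 k2
end

section
/- Let n_{k1,k2} be a 2^{k1}×2^{k2} contingency table arising from multinomial sampling under independence of the two marginal variables. Then the multivariate hypergeometric likelihood of the full table given its row and column totals factorizes as the product over all windows A ∈ ⋃_{i ≤ k1-1, j ≤ k2-1} A^{i,j} of the univariate hypergeometric probabilities of the 2×2 subtables: P(n_{k1,k2} | row totals, column totals) = ∏_A P(n(A_{00}) | n(A_{0·}), n(A_{·0}), n(A)). -/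
/-!
Written in factorials, the hypergeometric probability of a window is
`n(A₀·)! n(A₁·)! n(A·₀)! n(A·₁)! / (n(A)! n(A₀₀)! n(A₀₁)! n(A₁₀)! n(A₁₁)!)`.
The rows of a level-`(i, j)` window are level-`(i+1, j)` windows, its columns level-`(i, j+1)`
windows and its cells level-`(i+1, j+1)` windows, so with `F i j` the product of the factorials of
all level-`(i, j)` window counts the level-`(i, j)` factor of the product is the cross ratio
`F (i+1) j * F i (j+1) / (F i j * F (i+1) (j+1))`. These telescope in both indices to
`F k1 0 * F 0 k2 / (F 0 0 * F k1 k2)`, and the four boundary levels are the row sums, the column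
sums, the grand total and the cells of the table.
-/

/-- The hypergeometric pmf HG(a,b,c) at x. -/
noncomputable def hgPmf (a b c x : ℕ) : ℝ :=
  (a.choose x * (c - a).choose (b - x) : ℝ) / (c.choose b : ℝ)

/-- The count of a dyadic window: for a 2^k1 × 2^k2 table `n` (0-indexed), the
total count over the level-(i,j) window with indices (l1,l2), i.e., the block of
rows [l1·2^(k1-i), (l1+1)·2^(k1-i)) and columns [l2·2^(k2-j), (l2+1)·2^(k2-j)). -/
def windowCount (k1 k2 : ℕ) (n : ℕ → ℕ → ℕ) (i l1 j l2 : ℕ) : ℕ :=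
  ∑ a ∈ Finset.Ico (l1 * 2 ^ (k1 - i)) ((l1 + 1) * 2 ^ (k1 - i)),
    ∑ b ∈ Finset.Ico (l2 * 2 ^ (k2 - j)) ((l2 + 1) * 2 ^ (k2 - j)), n a b

open Finset Nat

theorem Finset.prod_range_two_mul {M : Type*} [CommMonoid M] (f : ℕ → M) (n : ℕ) :
    ∏ l ∈ range (2 * n), f l = ∏ l ∈ range n, f (2 * l) * f (2 * l + 1) := by
  induction n with
  | zero => simp
  | succ n ih =>
    rw [Nat.mul_succ, prod_range_succ, prod_range_succ, ih, prod_range_succ, mul_assoc]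

theorem Finset.sum_Ico_mul_two_mul {M : Type*} [AddCommMonoid M] (f : ℕ → M) (l m : ℕ) :
    ∑ a ∈ Ico (l * (2 * m)) ((l + 1) * (2 * m)), f a =
      ∑ a ∈ Ico (2 * l * m) ((2 * l + 1) * m), f a +
        ∑ a ∈ Ico ((2 * l + 1) * m) ((2 * l + 1 + 1) * m), f a := by
  rw [sum_Ico_consecutive _ (by gcongr; omega) (by gcongr; omega)]
  congr 2 <;> ring

theorem Finset.prod_range_div_of_ne_zero {G : Type*} [CommGroupWithZero G] {f : ℕ → G}
    (hf : ∀ i, f i ≠ 0) (n : ℕ) : ∏ i ∈ range n, f (i + 1) / f i = f n / f 0 := by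
  induction n with
  | zero => simp [hf 0]
  | succ n ih => rw [prod_range_succ, ih, div_mul_div_cancel₀' (hf n)]

theorem Finset.prod_range_prod_range_cross_ratio {G : Type*} [CommGroupWithZero G]
    {F : ℕ → ℕ → G} (hF : ∀ i j, F i j ≠ 0) (m n : ℕ) :
    ∏ i ∈ range m, ∏ j ∈ range n, F (i + 1) j * F i (j + 1) / (F i j * F (i + 1) (j + 1)) =
      F m 0 * F 0 n / (F 0 0 * F m n) := by
  have hcross (i j : ℕ) : F (i + 1) j * F i (j + 1) / (F i j * F (i + 1) (j + 1)) =
      (F i (j + 1) / F i j) / (F (i + 1) (j + 1) / F (i + 1) j) := by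
    rw [div_div_div_eq, mul_comm (F (i + 1) j)]
  have hrow (i : ℕ) : ∏ j ∈ range n, F i (j + 1) / F i j = F i n / F i 0 :=
    prod_range_div_of_ne_zero (hF i) n
  have hcol (i : ℕ) : (F i n / F i 0) / (F (i + 1) n / F (i + 1) 0) =
      (F (i + 1) 0 / F (i + 1) n) / (F i 0 / F i n) := by
    rw [div_div_div_eq, div_div_div_eq, mul_comm (F i n), mul_comm (F i 0)]
  calc _ = ∏ i ∈ range m, (F (i + 1) 0 / F (i + 1) n) / (F i 0 / F i n) := by
        refine prod_congr rfl fun i _ => ?_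
        rw [prod_congr rfl fun j _ => hcross i j, prod_div_distrib, hrow, hrow, hcol]
    _ = F m 0 * F 0 n / (F 0 0 * F m n) := by
        rw [prod_range_div_of_ne_zero (fun i => div_ne_zero (hF i 0) (hF i n)), div_div_div_eq,
          mul_comm (F m n)]

theorem hgPmf_eq_factorials (x p q r : ℕ) :
    hgPmf (x + p) (x + q) (x + p + (q + r)) x =
      ((x + p)! * (q + r)! * (x + q)! * (p + r)! : ℝ) /
        ((x + p + (q + r))! * (x ! * p ! * q ! * r !)) := by
  simp only [hgPmf, Nat.add_sub_cancel_left]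
  rw [Nat.cast_choose ℝ (Nat.le_add_right x p), Nat.cast_choose ℝ (Nat.le_add_right q r),
    Nat.cast_choose ℝ (by omega : x + q ≤ x + p + (q + r)), Nat.add_sub_cancel_left,
    Nat.add_sub_cancel_left, (by omega : x + p + (q + r) - (x + q) = p + r)]
  field_simp

section Windows

variable (k1 k2 : ℕ) (n : ℕ → ℕ → ℕ)

theorem windowCount_eq_add_rows {i : ℕ} (hi : i < k1) (l1 j l2 : ℕ) :
    windowCount k1 k2 n i l1 j l2 =
      windowCount k1 k2 n (i + 1) (2 * l1) j l2 +
        windowCount k1 k2 n (i + 1) (2 * l1 + 1) j l2 := by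
  have h : 2 ^ (k1 - i) = 2 * 2 ^ (k1 - (i + 1)) := by rw [← pow_succ']; congr 1; omega
  simp only [windowCount, h, sum_Ico_mul_two_mul]

theorem windowCount_eq_add_cols {j : ℕ} (hj : j < k2) (i l1 l2 : ℕ) :
    windowCount k1 k2 n i l1 j l2 =
      windowCount k1 k2 n i l1 (j + 1) (2 * l2) +
        windowCount k1 k2 n i l1 (j + 1) (2 * l2 + 1) := by
  have h : 2 ^ (k2 - j) = 2 * 2 ^ (k2 - (j + 1)) := by rw [← pow_succ']; congr 1; omega
  simp only [windowCount, h, sum_Ico_mul_two_mul, sum_add_distrib]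

noncomputable def levelFactorialProd (i j : ℕ) : ℝ :=
  ∏ l1 ∈ range (2 ^ i), ∏ l2 ∈ range (2 ^ j), ((windowCount k1 k2 n i l1 j l2)! : ℝ)

theorem levelFactorialProd_ne_zero (i j : ℕ) : levelFactorialProd k1 k2 n i j ≠ 0 :=
  prod_ne_zero_iff.2 fun _ _ => prod_ne_zero_iff.2 fun _ _ => by positivity

theorem hgPmf_window_eq {i j : ℕ} (hi : i < k1) (hj : j < k2) (l1 l2 : ℕ) :
    let f := fun i l1 j l2 => ((windowCount k1 k2 n i l1 j l2)! : ℝ)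
    hgPmf (windowCount k1 k2 n (i + 1) (2 * l1) j l2)
        (windowCount k1 k2 n i l1 (j + 1) (2 * l2))
        (windowCount k1 k2 n i l1 j l2)
        (windowCount k1 k2 n (i + 1) (2 * l1) (j + 1) (2 * l2)) =
      (f (i + 1) (2 * l1) j l2 * f (i + 1) (2 * l1 + 1) j l2) *
          (f i l1 (j + 1) (2 * l2) * f i l1 (j + 1) (2 * l2 + 1)) /
        (f i l1 j l2 *
          ((f (i + 1) (2 * l1) (j + 1) (2 * l2) * f (i + 1) (2 * l1) (j + 1) (2 * l2 + 1)) *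
            (f (i + 1) (2 * l1 + 1) (j + 1) (2 * l2) *
              f (i + 1) (2 * l1 + 1) (j + 1) (2 * l2 + 1)))) := by
  intro f
  have hrows := windowCount_eq_add_rows k1 k2 n hi
  have hcols := windowCount_eq_add_cols k1 k2 n hj
  simp only [f, hcols (i + 1), hrows l1 (j + 1), hrows l1 j, hgPmf_eq_factorials]
  ring

theorem prod_hgPmf_level_eq {i j : ℕ} (hi : i < k1) (hj : j < k2) :
    ∏ l1 ∈ range (2 ^ i), ∏ l2 ∈ range (2 ^ j),
        hgPmf (windowCount k1 k2 n (i + 1) (2 * l1) j l2)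
          (windowCount k1 k2 n i l1 (j + 1) (2 * l2))
          (windowCount k1 k2 n i l1 j l2)
          (windowCount k1 k2 n (i + 1) (2 * l1) (j + 1) (2 * l2)) =
      levelFactorialProd k1 k2 n (i + 1) j * levelFactorialProd k1 k2 n i (j + 1) /
        (levelFactorialProd k1 k2 n i j * levelFactorialProd k1 k2 n (i + 1) (j + 1)) := by
  simp only [hgPmf_window_eq k1 k2 n hi hj, levelFactorialProd, pow_succ', prod_range_two_mul,
    prod_div_distrib, prod_mul_distrib]
  ring

theorem levelFactorialProd_zero_zero :
    levelFactorialProd k1 k2 n 0 0 =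
      ((∑ a ∈ range (2 ^ k1), ∑ b ∈ range (2 ^ k2), n a b)! : ℝ) := by
  simp only [levelFactorialProd, windowCount, Nat.sub_zero, pow_zero, zero_mul, zero_add, one_mul,
    prod_range_one, ← range_eq_Ico]

theorem levelFactorialProd_self_zero :
    levelFactorialProd k1 k2 n k1 0 =
      ∏ a ∈ range (2 ^ k1), ((∑ b ∈ range (2 ^ k2), n a b)! : ℝ) := by
  simp only [levelFactorialProd, windowCount, Nat.sub_self, Nat.sub_zero, pow_zero, zero_mul,
    zero_add, one_mul, mul_one, prod_range_one, Nat.Ico_succ_singleton, sum_singleton,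
    ← range_eq_Ico]

theorem levelFactorialProd_zero_self :
    levelFactorialProd k1 k2 n 0 k2 =
      ∏ b ∈ range (2 ^ k2), ((∑ a ∈ range (2 ^ k1), n a b)! : ℝ) := by
  simp only [levelFactorialProd, windowCount, Nat.sub_self, Nat.sub_zero, pow_zero, zero_mul,
    zero_add, one_mul, mul_one, prod_range_one, Nat.Ico_succ_singleton, sum_singleton,
    ← range_eq_Ico]

theorem levelFactorialProd_self_self :
    levelFactorialProd k1 k2 n k1 k2 =
      ∏ a ∈ range (2 ^ k1), ∏ b ∈ range (2 ^ k2), ((n a b)! : ℝ) := by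
  simp only [levelFactorialProd, windowCount, Nat.sub_self, pow_zero, mul_one,
    Nat.Ico_succ_singleton, sum_singleton]

end Windows

/-- Multi-scale factorization of the multivariate hypergeometric likelihood:
the MHG pmf of a 2^k1 × 2^k2 contingency table given its row and column totals
equals the product, over all dyadic windows A in the strata A^{i,j} with
i ≤ k1-1, j ≤ k2-1, of the univariate hypergeometric probabilities
P(n(A₀₀) | n(A₀·), n(A·₀), n(A)) of the associated 2×2 subtables. -/
theorem MHG_likelihood_factorization
    (k1 k2 : ℕ) (n : ℕ → ℕ → ℕ) :
    ((∏ i ∈ Finset.range (2 ^ k1), ((∑ j ∈ Finset.range (2 ^ k2), n i j).factorial : ℝ)) *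
        ∏ j ∈ Finset.range (2 ^ k2), ((∑ i ∈ Finset.range (2 ^ k1), n i j).factorial : ℝ)) /
      (((∑ i ∈ Finset.range (2 ^ k1), ∑ j ∈ Finset.range (2 ^ k2), n i j).factorial : ℝ) *
        ∏ i ∈ Finset.range (2 ^ k1), ∏ j ∈ Finset.range (2 ^ k2), ((n i j).factorial : ℝ)) =
    ∏ i ∈ Finset.range k1, ∏ j ∈ Finset.range k2,
      ∏ l1 ∈ Finset.range (2 ^ i), ∏ l2 ∈ Finset.range (2 ^ j),
        hgPmf (windowCount k1 k2 n (i + 1) (2 * l1) j l2)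
          (windowCount k1 k2 n i l1 (j + 1) (2 * l2))
          (windowCount k1 k2 n i l1 j l2)
          (windowCount k1 k2 n (i + 1) (2 * l1) (j + 1) (2 * l2)) := by
  rw [prod_congr rfl fun i hi => prod_congr rfl fun j hj =>
      prod_hgPmf_level_eq k1 k2 n (mem_range.1 hi) (mem_range.1 hj),
    prod_range_prod_range_cross_ratio (levelFactorialProd_ne_zero k1 k2 n),
    levelFactorialProd_self_zero, levelFactorialProd_zero_self, levelFactorialProd_zero_zero,
    levelFactorialProd_self_self]
end

section
/- Let π_{i,j} > 0 be cell probabilities of an I×J table. If for a set of positive reals the three pairwise local-independence conditions π_{i,j}π_{i+1,j+1} = π_{i,j+1}π_{i+1,j} hold for all adjacent 2×2 subtables (all local odds ratios equal 1), then for all pairs of row index sets and column index sets obtained as unions of consecutive indices, the corresponding aggregated 2×2 table also has odds ratio 1: [Σ_{i∈R1, j∈C1} π_{i,j}]·[Σ_{i∈R2, j∈C2} π_{i,j}] = [Σ_{i∈R1, j∈C2} π_{i,j}]·[Σ_{i∈R2, j∈C1} π_{i,j}], where R1, R2 partition consecutive row ranges and C1, C2 partition consecutive column ranges. -/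
/-!
Positive entries with all adjacent cross-ratios equal to one have all cross-ratios equal to one:
along a pair of rows (or columns) the ratio of corresponding entries is constant, and this
propagates from adjacent to arbitrary pairs. Expanding the two products of block sums then pairs
the terms `π i j * π i' j'` and `π i j' * π i' j` one by one.
-/

open Finset

theorem mul_eq_mul_of_succ {R : Type*} [CommRing R] [IsDomain R] {x y : ℕ → R} {n : ℕ}
    (hy : ∀ k < n, y k ≠ 0) (hsucc : ∀ k, k + 1 < n → x k * y (k + 1) = x (k + 1) * y k)
    {j j' : ℕ} (hj : j < n) (hj' : j' < n) : x j * y j' = x j' * y j := by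
  wlog hle : j ≤ j' generalizing j j'
  · exact (this hj' hj (le_of_not_ge hle)).symm
  induction j', hle using Nat.le_induction with
  | base => rfl
  | succ k hjk ih =>
    have hk : k < n := by omega
    refine mul_right_cancel₀ (hy k hk) ?_
    linear_combination y (k + 1) * ih hk + y j * hsucc k hj'

theorem cross_mul_eq_of_adjacent {R : Type*} [CommRing R] [IsDomain R] {I J : ℕ}
    {π : ℕ → ℕ → R} (hne : ∀ i < I, ∀ j < J, π i j ≠ 0)
    (hloc : ∀ i, i + 1 < I → ∀ j, j + 1 < J →
      π i j * π (i + 1) (j + 1) = π i (j + 1) * π (i + 1) j)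
    {i i' j j' : ℕ} (hi : i < I) (hi' : i' < I) (hj : j < J) (hj' : j' < J) :
    π i j * π i' j' = π i j' * π i' j := by
  have adjacent_rows : ∀ k, k + 1 < I → π k j * π (k + 1) j' = π (k + 1) j * π k j' := by
    intro k hk
    rw [mul_eq_mul_of_succ (fun m hm => hne (k + 1) hk m hm) (hloc k hk) hj hj', mul_comm]
  exact (mul_eq_mul_of_succ (fun k hk => hne k hk j' hj') adjacent_rows hi hi').trans
    (mul_comm _ _)

theorem sum_sum_mul_sum_sum_comm {R : Type*} [CommSemiring R] {ι κ : Type*}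
    {A A' : Finset ι} {B B' : Finset κ} {f : ι → κ → R}
    (h : ∀ i ∈ A, ∀ i' ∈ A', ∀ j ∈ B, ∀ j' ∈ B', f i j * f i' j' = f i j' * f i' j) :
    (∑ i ∈ A, ∑ j ∈ B, f i j) * (∑ i' ∈ A', ∑ j' ∈ B', f i' j') =
      (∑ i ∈ A, ∑ j' ∈ B', f i j') * (∑ i' ∈ A', ∑ j ∈ B, f i' j) := by
  simp only [sum_mul_sum]
  refine sum_congr rfl fun i hi => sum_congr rfl fun i' hi' => ?_
  rw [sum_comm]
  exact sum_congr rfl fun j' hj' => sum_congr rfl fun j hj => h i hi i' hi' j hj j' hj'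

theorem local_independence_aggregates_general
    (I J : ℕ) (π : ℕ → ℕ → ℝ)
    (hpos : ∀ i < I, ∀ j < J, 0 < π i j)
    (hloc : ∀ i, i + 1 < I → ∀ j, j + 1 < J →
        π i j * π (i + 1) (j + 1) = π i (j + 1) * π (i + 1) j)
    (r s t c u v : ℕ)
    (hrI : r + t < I) (hcJ : c + v < J) :
    (∑ i ∈ Finset.Icc r (r + s), ∑ j ∈ Finset.Icc c (c + u), π i j) *
      (∑ i ∈ Finset.Icc (r + s + 1) (r + t), ∑ j ∈ Finset.Icc (c + u + 1) (c + v), π i j) =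
    (∑ i ∈ Finset.Icc r (r + s), ∑ j ∈ Finset.Icc (c + u + 1) (c + v), π i j) *
      (∑ i ∈ Finset.Icc (r + s + 1) (r + t), ∑ j ∈ Finset.Icc c (c + u), π i j) := by
  refine sum_sum_mul_sum_sum_comm fun i hi i' hi' j hj j' hj' => ?_
  simp only [mem_Icc] at hi hi' hj hj'
  exact cross_mul_eq_of_adjacent (fun i hi j hj => (hpos i hi j hj).ne') hloc
    (by omega) (by omega) (by omega) (by omega)

/-- If all local odds ratios of a positive I×J table equal 1
(π_{i,j}π_{i+1,j+1} = π_{i,j+1}π_{i+1,j} for all adjacent 2×2 subtables), then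
for any partition of consecutive row blocks R1 = {r,...,r+s}, R2 = {r+s+1,...,r+t}
and consecutive column blocks C1 = {c,...,c+u}, C2 = {c+u+1,...,c+v}, the
aggregated 2×2 table also has odds ratio 1. -/
theorem local_independence_aggregates
    (I J : ℕ) (π : ℕ → ℕ → ℝ)
    (hpos : ∀ i < I, ∀ j < J, 0 < π i j)
    (hloc : ∀ i, i + 1 < I → ∀ j, j + 1 < J →
        π i j * π (i + 1) (j + 1) = π i (j + 1) * π (i + 1) j)
    (r s t c u v : ℕ) (hst : s < t) (huv : u < v)
    (hrI : r + t < I) (hcJ : c + v < J) :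
    (∑ i ∈ Finset.Icc r (r + s), ∑ j ∈ Finset.Icc c (c + u), π i j) *
      (∑ i ∈ Finset.Icc (r + s + 1) (r + t), ∑ j ∈ Finset.Icc (c + u + 1) (c + v), π i j) =
    (∑ i ∈ Finset.Icc r (r + s), ∑ j ∈ Finset.Icc (c + u + 1) (c + v), π i j) *
      (∑ i ∈ Finset.Icc (r + s + 1) (r + t), ∑ j ∈ Finset.Icc c (c + u), π i j) :=
  local_independence_aggregates_general I J π hpos hloc r s t c u v hrI hcJ
end
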